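/- Let M = [[P, Q], [R, S]] be a 2n×2n real symplectic matrix written in n×n blocks. Then the n×n matrix (1/2)(P∘P + Q∘Q + R∘R + S∘S), where ∘ denotes the Hadamard (entrywise) product, is doubly superstochastic; that is, there exists a doubly stochastic matrix E with (1/2)(P∘P + Q∘Q + R∘R + S∘S)_{ij} ≥ E_{ij} for all i, j. -/

import Mathlib

open Matrix BigOperators

/-- The standard symplectic form matrix `J = [[0, I], [-I, 0]]`. -/
def Jm (ι : Type*) [Fintype ι] [DecidableEq ι] : Matrix (ι ⊕ ι) (ι ⊕ ι) ℝ :=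
  Matrix.fromBlocks 0 1 (-1) 0

/-- A real `2n × 2n` matrix is symplectic if `Mᵀ J M = J`. -/
def IsSymplectic {ι : Type*} [Fintype ι] [DecidableEq ι]
    (M : Matrix (ι ⊕ ι) (ι ⊕ ι) ℝ) : Prop :=
  Mᵀ * Jm ι * M = Jm ι

/-- A subspace `W` of `ℝ^{2n}` is symplectic if every nonzero `u ∈ W` pairs
nontrivially via `J` with some `v ∈ W`. -/
def IsSymplecticSubspace {ι : Type*} [Fintype ι] [DecidableEq ι]
    (W : Submodule ℝ ((ι ⊕ ι) → ℝ)) : Prop :=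
  ∀ u ∈ W, u ≠ 0 → ∃ v ∈ W, u ⬝ᵥ (Jm ι).mulVec v ≠ 0

/-- `A` has symplectic kernel. -/
def HasSymplecticKernel {ι : Type*} [Fintype ι] [DecidableEq ι]
    (A : Matrix (ι ⊕ ι) (ι ⊕ ι) ℝ) : Prop :=
  IsSymplecticSubspace (LinearMap.ker A.mulVecLin)

/-- `d` is a vector of symplectic eigenvalues of `A` (Williamson diagonalization). -/
def IsSympSpectrum {ι : Type*} [Fintype ι] [DecidableEq ι]
    (A : Matrix (ι ⊕ ι) (ι ⊕ ι) ℝ) (d : ι → ℝ) : Prop :=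
  ∃ M : Matrix (ι ⊕ ι) (ι ⊕ ι) ℝ, IsSymplectic M ∧
    Mᵀ * A * M = Matrix.fromBlocks (Matrix.diagonal d) 0 0 (Matrix.diagonal d)

/-- Doubly stochastic matrix. -/
def DoublyStochastic {n : ℕ} (E : Matrix (Fin n) (Fin n) ℝ) : Prop :=
  (∀ i j, 0 ≤ E i j) ∧ (∀ i, ∑ j, E i j = 1) ∧ (∀ j, ∑ i, E i j = 1)

/-- Doubly superstochastic matrix: entrywise dominates a doubly stochastic matrix. -/
def DoublySuperstochastic {n : ℕ} (S : Matrix (Fin n) (Fin n) ℝ) : Prop :=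
  ∃ E, DoublyStochastic E ∧ ∀ i j, E i j ≤ S i j

/-- `X` lies in the convex hull of the symplectic orbit of `B`. -/
def InSympHull {ι : Type*} [Fintype ι] [DecidableEq ι]
    (B X : Matrix (ι ⊕ ι) (ι ⊕ ι) ℝ) : Prop :=
  ∃ (m : ℕ) (p : Fin m → ℝ) (M : Fin m → Matrix (ι ⊕ ι) (ι ⊕ ι) ℝ),
    (∀ i, 0 ≤ p i) ∧ (∑ i, p i = 1) ∧ (∀ i, IsSymplectic (M i)) ∧
    X = ∑ i, p i • ((M i)ᵀ * B * M i)

/-- Sum of the `k` smallest entries of `x`. -/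
noncomputable def psum {n : ℕ} (x : Fin n → ℝ) (k : ℕ) : ℝ :=
  ∑ j ∈ Finset.univ.filter (fun j : Fin n => (j : ℕ) < k), x (Tuple.sort x j)

/-!
Let `T = ½(P∘P + Q∘Q + R∘R + S∘S)`. A nonnegative square matrix `T` dominates a doubly
stochastic matrix as soon as `∑_{i ∈ A, j ∈ B} T i j ≥ |A| + |B| - n` for all index sets `A, B`.
This is max-flow/min-cut: a substochastic `F ≤ T` of maximal total mass saturates every column
that an augmenting path reaches, and the cut between the reachable rows and the unreachable
columns then forces every row sum of `F` to be `1`.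

For symplectic `M`, let `V` be the space of vectors supported on `B ⊔ B` whose image under `M`
is supported on `A ⊔ A`; a rank count gives `dim V ≥ 2(|A| + |B| - n)`. With `G = P_A M P_B`
the compression of `M` to these coordinates, `⟪M x, J G (J x)⟫ = -‖x‖²` by `Mᵀ J M = J`, so
Cauchy–Schwarz and AM-GM give `‖G x‖² + ‖G (J x)‖² ≥ 2‖x‖²` on `V`. Summing over an orthonormal
basis of `V` and its image under the orthogonal `J`, Bessel's inequality bounds `dim V` by the
squared Frobenius norm of `G`, which is `∑_{i ∈ A, j ∈ B} (P²+Q²+R²+S²) i j = 2 ∑_{A × B} T`;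
so `T` satisfies the condition above.
-/

open Finset Module Filter Topology

theorem eventually_add_mul_le {u v c : ℝ} (hu : u ≤ c) (hv : 0 < v → u < c) :
    ∀ᶠ ε in 𝓝[>] 0, u + ε * v ≤ c := by
  by_cases h : 0 < v
  · have : Tendsto (fun ε : ℝ => u + ε * v) (𝓝 0) (𝓝 u) :=
      (by fun_prop : Continuous fun ε : ℝ => u + ε * v).tendsto' 0 u (by simp)
    exact (tendsto_nhdsWithin_of_tendsto_nhds this).eventually_le_const (hv h)
  · filter_upwards [self_mem_nhdsWithin] with ε (hε : 0 < ε)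
    nlinarith

section Transport

variable {ι : Type*}

def IsResidualDirection (T F D : Matrix ι ι ℝ) : Prop :=
  ∀ a b, (0 < D a b → F a b < T a b) ∧ (D a b < 0 → 0 < F a b)

theorem IsResidualDirection.add {T F D D' : Matrix ι ι ℝ} (hD : IsResidualDirection T F D)
    (hD' : IsResidualDirection T F D') : IsResidualDirection T F (D + D') := by
  intro a b
  simp only [Matrix.add_apply]
  constructor <;> intro h
  · by_cases h' : 0 < D a b
    · exact (hD a b).1 h'
    · exact (hD' a b).1 (by linarith)
  · by_cases h' : D a b < 0
    · exact (hD a b).2 h'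
    · exact (hD' a b).2 (by linarith)

variable [Fintype ι]

structure IsSubstochasticBelow (T F : Matrix ι ι ℝ) : Prop where
  nonneg : ∀ i j, 0 ≤ F i j
  le : ∀ i j, F i j ≤ T i j
  rowSum_le : ∀ i, ∑ j, F i j ≤ 1
  colSum_le : ∀ j, ∑ i, F i j ≤ 1

theorem exists_isSubstochasticBelow_forall_sum_le (T : Matrix ι ι ℝ) (hT : ∀ i j, 0 ≤ T i j) :
    ∃ F, IsSubstochasticBelow T F ∧
      ∀ F', IsSubstochasticBelow T F' → ∑ i, ∑ j, F' i j ≤ ∑ i, ∑ j, F i j := by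
  have hK : {F | IsSubstochasticBelow T F} =
      {F : Matrix ι ι ℝ | ∀ i j, 0 ≤ F i j} ∩ {F | ∀ i j, F i j ≤ T i j} ∩
        {F | ∀ i, ∑ j, F i j ≤ 1} ∩ {F | ∀ j, ∑ i, F i j ≤ 1} := by
    ext F
    exact ⟨fun ⟨h₁, h₂, h₃, h₄⟩ => ⟨⟨⟨h₁, h₂⟩, h₃⟩, h₄⟩,
      fun ⟨⟨⟨h₁, h₂⟩, h₃⟩, h₄⟩ => ⟨h₁, h₂, h₃, h₄⟩⟩
  have hclosed : IsClosed {F | IsSubstochasticBelow T F} := by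
    rw [hK]
    simp only [Set.ofPred_forall]
    refine ((IsClosed.inter ?_ ?_).inter ?_).inter ?_ <;> refine isClosed_iInter fun i => ?_
    · exact isClosed_iInter fun j => isClosed_le continuous_const (by fun_prop)
    · exact isClosed_iInter fun j => isClosed_le (by fun_prop) continuous_const
    · exact isClosed_le (by fun_prop) continuous_const
    · exact isClosed_le (by fun_prop) continuous_const
  have hbounded : {F | IsSubstochasticBelow T F} ⊆ Set.univ.pi fun i => Set.univ.pi fun j =>
      Set.Icc 0 (T i j) := fun F hF i _ j _ => ⟨hF.nonneg i j, hF.le i j⟩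
  have hcompact : IsCompact {F | IsSubstochasticBelow T F} :=
    (isCompact_univ_pi fun i => isCompact_univ_pi fun j => isCompact_Icc).of_isClosed_subset
      hclosed hbounded
  obtain ⟨F, hF, hmax⟩ := hcompact.exists_isMaxOn ⟨0, by constructor <;> simp [hT]⟩
    (f := fun F : Matrix ι ι ℝ => ∑ i, ∑ j, F i j) (by fun_prop)
  exact ⟨F, hF, fun F' hF' => hmax hF'⟩

variable [DecidableEq ι]

omit [Fintype ι] in
theorem isResidualDirection_single {T F : Matrix ι ι ℝ} {i j : ι} {c : ℝ}
    (hpos : 0 < c → F i j < T i j) (hneg : c < 0 → 0 < F i j) :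
    IsResidualDirection T F (single i j c) := by
  intro a b
  by_cases h : i = a ∧ j = b
  · obtain ⟨rfl, rfl⟩ := h
    simpa using ⟨hpos, hneg⟩
  · simp [h]

theorem sum_single_apply_right (i j a : ι) (c : ℝ) :
    ∑ b, single i j c a b = if i = a then c else 0 := by
  simp [single_apply, ite_and]

theorem sum_single_apply_left (i j b : ι) (c : ℝ) :
    ∑ a, single i j c a b = if j = b then c else 0 := by
  simp [single_apply, ite_and]

/-- `D` is a unit flow from the source to the node `x` in the residual network of `F`, whose
nodes are the rows `.inl a` and the columns `.inr b`. -/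
structure IsAugmentingFlow (T F : Matrix ι ι ℝ) (x : ι ⊕ ι) (D : Matrix ι ι ℝ) : Prop where
  residual : IsResidualDirection T F D
  rowSum : ∀ a, 0 < ∑ b, D a b + (if x = .inl a then 1 else 0) → ∑ b, F a b < 1
  colSum : ∀ b, ∑ a, D a b = if x = .inr b then 1 else 0

inductive ResidualReachable (T F : Matrix ι ι ℝ) : ι ⊕ ι → Prop
  | unsaturated {i : ι} : ∑ j, F i j < 1 → ResidualReachable T F (.inl i)
  | forward {i j : ι} : ResidualReachable T F (.inl i) → F i j < T i j →
      ResidualReachable T F (.inr j)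
  | backward {i j : ι} : ResidualReachable T F (.inr j) → 0 < F i j →
      ResidualReachable T F (.inl i)

theorem ResidualReachable.exists_isAugmentingFlow {T F : Matrix ι ι ℝ} {x : ι ⊕ ι}
    (h : ResidualReachable T F x) : ∃ D, IsAugmentingFlow T F x D := by
  induction h with
  | unsaturated hi =>
    refine ⟨0, fun a b => by simp, fun a ha => ?_, fun b => by simp⟩
    simp only [Matrix.zero_apply, sum_const_zero, zero_add, Sum.inl.injEq] at ha
    split_ifs at ha with h
    · exact h ▸ hi
    · exact absurd ha (lt_irrefl 0)
  | @forward i j _ hij ih =>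
    obtain ⟨D, hres, hrow, hcol⟩ := ih
    refine ⟨D + single i j 1, hres.add (isResidualDirection_single (fun _ => hij) (by simp)),
      fun a ha => hrow a ?_, fun b => ?_⟩
    · simpa [sum_add_distrib, sum_single_apply_right, eq_comm] using ha
    · simp [sum_add_distrib, sum_single_apply_left, hcol]
  | @backward i j _ hij ih =>
    obtain ⟨D, hres, hrow, hcol⟩ := ih
    refine ⟨D + single i j (-1), hres.add (isResidualDirection_single (by simp) fun _ => hij),
      fun a ha => hrow a ?_, fun b => ?_⟩
    · simpa [sum_add_distrib, sum_single_apply_right, add_assoc, ite_add_ite, eq_comm] using ha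
    · simp [sum_add_distrib, sum_single_apply_left, hcol, ite_add_ite]

theorem IsAugmentingFlow.eventually_isSubstochasticBelow {T F D : Matrix ι ι ℝ} {j : ι}
    (hF : IsSubstochasticBelow T F) (hD : IsAugmentingFlow T F (.inr j) D)
    (hj : ∑ i, F i j < 1) : ∀ᶠ ε in 𝓝[>] (0 : ℝ), IsSubstochasticBelow T (F + ε • D) := by
  have hnonneg : ∀ᶠ ε in 𝓝[>] (0 : ℝ), ∀ a b, -F a b + ε * -D a b ≤ 0 :=
    eventually_all.2 fun a => eventually_all.2 fun b =>
      eventually_add_mul_le (by linarith [hF.nonneg a b]) fun h => by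
        linarith [(hD.residual a b).2 (by linarith)]
  have hle : ∀ᶠ ε in 𝓝[>] (0 : ℝ), ∀ a b, F a b + ε * D a b ≤ T a b :=
    eventually_all.2 fun a => eventually_all.2 fun b =>
      eventually_add_mul_le (hF.le a b) (hD.residual a b).1
  have hrow : ∀ᶠ ε in 𝓝[>] (0 : ℝ), ∀ a, ∑ b, F a b + ε * ∑ b, D a b ≤ 1 :=
    eventually_all.2 fun a =>
      eventually_add_mul_le (hF.rowSum_le a) fun h => hD.rowSum a (by simpa using h)
  have hcol : ∀ᶠ ε in 𝓝[>] (0 : ℝ), ∀ b, ∑ a, F a b + ε * ∑ a, D a b ≤ 1 :=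
    eventually_all.2 fun b => eventually_add_mul_le (hF.colSum_le b) fun h => by
      rw [hD.colSum] at h
      split_ifs at h with hb
      · exact Sum.inr_injective hb ▸ hj
      · exact absurd h (lt_irrefl 0)
  filter_upwards [hnonneg, hle, hrow, hcol] with ε h₁ h₂ h₃ h₄
  refine ⟨fun a b => ?_, fun a b => ?_, fun a => ?_, fun b => ?_⟩
  · simpa using (by linarith [h₁ a b] : 0 ≤ F a b + ε * D a b)
  · simpa using h₂ a b
  · simpa [sum_add_distrib, mul_sum] using h₃ a
  · simpa [sum_add_distrib, mul_sum] using h₄ b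

theorem IsSubstochasticBelow.colSum_eq_one_of_residualReachable {T F : Matrix ι ι ℝ}
    (hF : IsSubstochasticBelow T F)
    (hmax : ∀ F', IsSubstochasticBelow T F' → ∑ i, ∑ j, F' i j ≤ ∑ i, ∑ j, F i j) {j : ι}
    (hj : ResidualReachable T F (.inr j)) : ∑ i, F i j = 1 := by
  by_contra hne
  obtain ⟨D, hD⟩ := hj.exists_isAugmentingFlow
  obtain ⟨ε, hε, hεpos : 0 < ε⟩ :=
    ((hD.eventually_isSubstochasticBelow hF ((hF.colSum_le j).lt_of_ne hne)).and
      self_mem_nhdsWithin).exists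
  have hD1 : ∑ i, ∑ j, D i j = 1 := sum_comm.trans (by simp [hD.colSum])
  have := hmax _ hε
  simp only [Matrix.add_apply, Matrix.smul_apply, smul_eq_mul, sum_add_distrib, ← mul_sum,
    hD1] at this
  linarith

theorem IsSubstochasticBelow.rowSum_eq_one {T F : Matrix ι ι ℝ} (hF : IsSubstochasticBelow T F)
    (hT : ∀ A B : Finset ι, (#A : ℝ) + #B - Fintype.card ι ≤ ∑ i ∈ A, ∑ j ∈ B, T i j)
    (hcol : ∀ j, ResidualReachable T F (.inr j) → ∑ i, F i j = 1) (i : ι) :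
    ∑ j, F i j = 1 := by
  classical
  set R := univ.filter fun i => ResidualReachable T F (.inl i)
  set C := univ.filter fun j => ResidualReachable T F (.inr j)
  have hRC : ∀ i ∈ R, ∀ j ∈ Cᶜ, T i j = F i j := fun i hi j hj =>
    ((hF.le i j).lt_or_eq.resolve_left fun h =>
      mem_compl.1 hj (mem_filter.2 ⟨mem_univ _, .forward (mem_filter.1 hi).2 h⟩)).symm
  have hCR : ∀ j ∈ C, ∑ i ∈ R, F i j = 1 := fun j hj => by
    rw [← hcol j (mem_filter.1 hj).2]
    refine sum_subset (subset_univ R) fun i _ hi => ((hF.nonneg i j).lt_or_eq.resolve_left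
      fun h => hi (mem_filter.2 ⟨mem_univ _, .backward (mem_filter.1 hj).2 h⟩)).symm
  -- the capacity of the cut between `R` and `Cᶜ`
  have hcut : (#R : ℝ) ≤ ∑ i ∈ R, ∑ j, F i j := calc
    (#R : ℝ) = #R + #Cᶜ - Fintype.card ι + ∑ j ∈ C, 1 := by
      rw [card_compl, Nat.cast_sub (card_le_univ C)]; simp; ring
    _ ≤ ∑ i ∈ R, ∑ j ∈ Cᶜ, T i j + ∑ j ∈ C, ∑ i ∈ R, F i j := by
      gcongr with j hj
      exacts [hT R Cᶜ, (hCR j hj).ge]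
    _ = ∑ i ∈ R, ∑ j, F i j := by
      rw [sum_comm, ← sum_add_distrib]
      refine sum_congr rfl fun i hi => ?_
      rw [sum_congr rfl (hRC i hi), sum_compl_add_sum]
  by_contra hi
  have hlt := (hF.rowSum_le i).lt_of_ne hi
  have : ∑ i ∈ R, ∑ j, F i j < ∑ i ∈ R, 1 :=
    sum_lt_sum (fun i _ => hF.rowSum_le i) ⟨i, mem_filter.2 ⟨mem_univ _, .unsaturated hlt⟩, hlt⟩
  simp only [sum_const, nsmul_eq_mul, mul_one] at this
  linarith

theorem exists_mem_doublyStochastic_le (T : Matrix ι ι ℝ) (hT₀ : ∀ i j, 0 ≤ T i j)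
    (hT : ∀ A B : Finset ι, (#A : ℝ) + #B - Fintype.card ι ≤ ∑ i ∈ A, ∑ j ∈ B, T i j) :
    ∃ E ∈ doublyStochastic ℝ ι, ∀ i j, E i j ≤ T i j := by
  obtain ⟨F, hF, hmax⟩ := exists_isSubstochasticBelow_forall_sum_le T hT₀
  have hrow : ∀ i, ∑ j, F i j = 1 :=
    hF.rowSum_eq_one hT fun j hj => hF.colSum_eq_one_of_residualReachable hmax hj
  have hcol : ∀ j, ∑ i, F i j = 1 := fun j =>
    (sum_eq_sum_iff_of_le fun j (_ : j ∈ univ) => hF.colSum_le j).1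
      (sum_comm.trans (by simp [hrow])) j (mem_univ j)
  exact ⟨F, mem_doublyStochastic_iff_sum.2 ⟨hF.nonneg, hrow, hcol⟩, hF.le⟩

end Transport

section Bessel

variable {m N : Type*} [Fintype m] [Fintype N]

theorem mulVec_dotProduct_eq_dotProduct_transpose_mulVec {R : Type*} [CommSemiring R]
    (A : Matrix m N R) (u : N → R) (v : m → R) : (A *ᵥ u) ⬝ᵥ v = u ⬝ᵥ (Aᵀ *ᵥ v) := by
  rw [dotProduct_mulVec, vecMul_transpose]

theorem dotProduct_self_nonneg (v : N → ℝ) : 0 ≤ v ⬝ᵥ v :=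
  sum_nonneg fun i _ => mul_self_nonneg (v i)

theorem sum_sq_dotProduct_le_of_orthonormal {κ : Type*} [Fintype κ] (y : κ → N → ℝ)
    (hy : Orthonormal ℝ fun b => (WithLp.toLp 2 (y b) : EuclideanSpace ℝ N)) (g : N → ℝ) :
    ∑ b, (g ⬝ᵥ y b) ^ 2 ≤ g ⬝ᵥ g := by
  calc ∑ b, (g ⬝ᵥ y b) ^ 2
      = ∑ b, ‖inner ℝ (WithLp.toLp 2 (y b) : EuclideanSpace ℝ N) (WithLp.toLp 2 g)‖ ^ 2 := by
        simp [EuclideanSpace.inner_toLp_toLp]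
    _ ≤ ‖(WithLp.toLp 2 g : EuclideanSpace ℝ N)‖ ^ 2 := hy.sum_inner_products_le _
    _ = g ⬝ᵥ g := by rw [EuclideanSpace.norm_sq_eq]; simp [dotProduct, sq]

theorem sum_dotProduct_self_mulVec_le {κ : Type*} [Fintype κ] (G : Matrix m N ℝ)
    (y : κ → N → ℝ) (hy : Orthonormal ℝ fun b => (WithLp.toLp 2 (y b) : EuclideanSpace ℝ N)) :
    ∑ b, (G *ᵥ y b) ⬝ᵥ (G *ᵥ y b) ≤ ∑ a, ∑ c, G a c ^ 2 := calc
  ∑ b, (G *ᵥ y b) ⬝ᵥ (G *ᵥ y b) = ∑ a, ∑ b, (G a ⬝ᵥ y b) ^ 2 := by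
    simp only [dotProduct, sq]; rw [sum_comm]; rfl
  _ ≤ ∑ a, G a ⬝ᵥ G a := sum_le_sum fun a _ => sum_sq_dotProduct_le_of_orthonormal y hy (G a)
  _ = ∑ a, ∑ c, G a c ^ 2 := by simp [dotProduct, sq]

theorem exists_orthonormal_of_submodule (V : Submodule ℝ (N → ℝ)) :
    ∃ y : Fin (finrank ℝ V) → N → ℝ,
      (∀ b, y b ∈ V) ∧ Orthonormal ℝ fun b => (WithLp.toLp 2 (y b) : EuclideanSpace ℝ N) := by
  let e := (EuclideanSpace.equiv N ℝ).toLinearEquiv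
  let W := V.map e.symm.toLinearMap
  let ob := (stdOrthonormalBasis ℝ W).reindex (finCongr (LinearEquiv.finrank_map_eq e.symm V))
  refine ⟨fun b => e (ob b), fun b => ?_, ob.orthonormal.comp_linearIsometry W.subtypeₗᵢ⟩
  obtain ⟨x, hx, hxb⟩ := Submodule.mem_map.1 (ob b).2
  simpa [← hxb] using hx

theorem finrank_le_sum_sq_of_two_mul_le [DecidableEq N] (V : Submodule ℝ (N → ℝ))
    (G : Matrix m N ℝ) {J : Matrix N N ℝ} (hJ : Jᵀ * J = 1)
    (hV : ∀ x ∈ V, 2 * (x ⬝ᵥ x) ≤ (G *ᵥ x) ⬝ᵥ (G *ᵥ x) + (G *ᵥ (J *ᵥ x)) ⬝ᵥ (G *ᵥ (J *ᵥ x))) :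
    (finrank ℝ V : ℝ) ≤ ∑ a, ∑ c, G a c ^ 2 := by
  obtain ⟨y, hyV, hy⟩ := exists_orthonormal_of_submodule V
  have hy' : ∀ b c, y c ⬝ᵥ y b = if b = c then 1 else 0 := by
    simpa only [orthonormal_iff_ite, EuclideanSpace.inner_toLp_toLp, star_trivial] using hy
  have hJy : Orthonormal ℝ fun b => (WithLp.toLp 2 (J *ᵥ y b) : EuclideanSpace ℝ N) := by
    simpa only [orthonormal_iff_ite, EuclideanSpace.inner_toLp_toLp, star_trivial,
      mulVec_dotProduct_eq_dotProduct_transpose_mulVec, mulVec_mulVec, hJ, one_mulVec] using hy'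
  have hsum : 2 * (finrank ℝ V : ℝ) ≤
      ∑ b, (G *ᵥ y b) ⬝ᵥ (G *ᵥ y b) + ∑ b, (G *ᵥ (J *ᵥ y b)) ⬝ᵥ (G *ᵥ (J *ᵥ y b)) := by
    rw [← sum_add_distrib]
    calc 2 * (finrank ℝ V : ℝ) = ∑ b, 2 * (y b ⬝ᵥ y b) := by simp [hy', mul_comm]
      _ ≤ _ := sum_le_sum fun b _ => hV (y b) (hyV b)
  linarith [sum_dotProduct_self_mulVec_le G y hy, sum_dotProduct_self_mulVec_le G _ hJy]

end Bessel

theorem Matrix.rank_add_finrank_ker {m N K : Type*} [Fintype m] [Fintype N] [Field K]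
    (X : Matrix m N K) : X.rank + finrank K (LinearMap.ker X.mulVecLin) = Fintype.card N := by
  rw [Matrix.rank, LinearMap.finrank_range_add_finrank_ker, finrank_fintype_fun_eq_card]

theorem Submodule.finrank_add_finrank_le_finrank_inf_add {K V : Type*} [DivisionRing K]
    [AddCommGroup V] [Module K V] [FiniteDimensional K V] (p q : Submodule K V) :
    finrank K p + finrank K q ≤ finrank K ↥(p ⊓ q) + finrank K V := by
  rw [← Submodule.finrank_sup_add_finrank_inf_eq, add_comm]
  exact Nat.add_le_add_left (Submodule.finrank_le _) _

section Symplectic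

variable {ι : Type*} [Fintype ι] [DecidableEq ι]

theorem Jm_mul_self : Jm ι * Jm ι = -1 := by
  simp [Jm, fromBlocks_multiply, ← fromBlocks_one, fromBlocks_neg]

theorem transpose_Jm_mul_self : (Jm ι)ᵀ * Jm ι = 1 := by
  rw [show (Jm ι)ᵀ = -Jm ι by simp [Jm, fromBlocks_transpose, fromBlocks_neg], Matrix.neg_mul,
    Jm_mul_self, neg_neg]

def coordProj (s : Finset ι) : Matrix (ι ⊕ ι) (ι ⊕ ι) ℝ :=
  diagonal fun a => if a ∈ s.disjSum s then 1 else 0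

theorem coordProj_mul_Jm (s : Finset ι) : coordProj s * Jm ι = Jm ι * coordProj s := by
  ext (i | i) (j | j) <;> by_cases h : i = j <;> simp [coordProj, Jm, one_apply, h, apply_ite]

theorem Jm_mulVec_coordProj_mulVec (s : Finset ι) (v : ι ⊕ ι → ℝ) :
    Jm ι *ᵥ (coordProj s *ᵥ v) = coordProj s *ᵥ (Jm ι *ᵥ v) := by
  rw [mulVec_mulVec, ← coordProj_mul_Jm, ← mulVec_mulVec]

theorem dotProduct_coordProj_mulVec (s : Finset ι) (u v : ι ⊕ ι → ℝ) :
    u ⬝ᵥ (coordProj s *ᵥ v) = (coordProj s *ᵥ u) ⬝ᵥ v := by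
  rw [mulVec_dotProduct_eq_dotProduct_transpose_mulVec, coordProj, diagonal_transpose]

theorem rank_one_sub_coordProj (s : Finset ι) : (1 - coordProj s).rank = 2 * #sᶜ := by
  have : (1 : Matrix (ι ⊕ ι) (ι ⊕ ι) ℝ) - coordProj s =
      diagonal fun a => if a ∈ s.disjSum s then 0 else 1 := by
    rw [coordProj, ← diagonal_one, diagonal_sub]
    congr 1; ext a; split_ifs <;> simp
  rw [this, rank_diagonal, Fintype.card_subtype]
  simp only [ne_eq, ite_eq_left_iff, one_ne_zero, imp_false, not_not]
  rw [filter_notMem_eq_sdiff, ← compl_eq_univ_sdiff, card_compl, card_disjSum, card_compl,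
    Fintype.card_sum]
  have := card_le_univ s
  omega

theorem sum_sq_coordProj_mul_mul_coordProj (M : Matrix (ι ⊕ ι) (ι ⊕ ι) ℝ) (A B : Finset ι) :
    ∑ a, ∑ c, (coordProj A * M * coordProj B) a c ^ 2 =
      ∑ i ∈ A, ∑ j ∈ B, (M (.inl i) (.inl j) ^ 2 + M (.inl i) (.inr j) ^ 2 +
        M (.inr i) (.inl j) ^ 2 + M (.inr i) (.inr j) ^ 2) := by
  simp [coordProj, diagonal_mul, mul_diagonal, ite_pow, sum_add_distrib]
  ring

def blockSubspace (M : Matrix (ι ⊕ ι) (ι ⊕ ι) ℝ) (A B : Finset ι) :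
    Submodule ℝ (ι ⊕ ι → ℝ) :=
  LinearMap.ker (1 - coordProj B).mulVecLin ⊓ LinearMap.ker ((1 - coordProj A) * M).mulVecLin

theorem mem_blockSubspace {M : Matrix (ι ⊕ ι) (ι ⊕ ι) ℝ} {A B : Finset ι} {x : ι ⊕ ι → ℝ} :
    x ∈ blockSubspace M A B ↔ coordProj B *ᵥ x = x ∧ coordProj A *ᵥ (M *ᵥ x) = M *ᵥ x := by
  simp [blockSubspace, sub_eq_zero, eq_comm]

theorem two_mul_card_add_two_mul_card_le_finrank_blockSubspace
    (M : Matrix (ι ⊕ ι) (ι ⊕ ι) ℝ) (A B : Finset ι) :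
    2 * #A + 2 * #B ≤ finrank ℝ (blockSubspace M A B) + 2 * Fintype.card ι := by
  have hB := rank_add_finrank_ker (1 - coordProj B)
  have hA := rank_add_finrank_ker ((1 - coordProj A) * M)
  have hAM := rank_mul_le_left (1 - coordProj A) M
  have hinf := Submodule.finrank_add_finrank_le_finrank_inf_add
    (LinearMap.ker (1 - coordProj B).mulVecLin) (LinearMap.ker ((1 - coordProj A) * M).mulVecLin)
  rw [rank_one_sub_coordProj, card_compl] at hB hAM
  rw [finrank_fintype_fun_eq_card] at hinf
  rw [Fintype.card_sum] at hA hB hinf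
  have := card_le_univ A
  have := card_le_univ B
  unfold blockSubspace
  omega

theorem IsSymplectic.two_mul_dotProduct_self_le {M : Matrix (ι ⊕ ι) (ι ⊕ ι) ℝ}
    (hM : IsSymplectic M) {A B : Finset ι} {x : ι ⊕ ι → ℝ}
    (hBx : coordProj B *ᵥ x = x) (hAx : coordProj A *ᵥ (M *ᵥ x) = M *ᵥ x) :
    2 * (x ⬝ᵥ x) ≤
      ((coordProj A * M * coordProj B) *ᵥ x) ⬝ᵥ ((coordProj A * M * coordProj B) *ᵥ x) +
      ((coordProj A * M * coordProj B) *ᵥ (Jm ι *ᵥ x)) ⬝ᵥ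
        ((coordProj A * M * coordProj B) *ᵥ (Jm ι *ᵥ x)) := by
  set J := Jm ι
  set u := M *ᵥ x
  set w := coordProj A *ᵥ (M *ᵥ (J *ᵥ x))
  have hGx : (coordProj A * M * coordProj B) *ᵥ x = u := by
    rw [← mulVec_mulVec, hBx, ← mulVec_mulVec, hAx]
  have hGJx : (coordProj A * M * coordProj B) *ᵥ (J *ᵥ x) = w := by
    rw [← mulVec_mulVec, ← Jm_mulVec_coordProj_mulVec, hBx, ← mulVec_mulVec]
  have hpair : u ⬝ᵥ (J *ᵥ w) = -(x ⬝ᵥ x) := calc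
    u ⬝ᵥ (J *ᵥ w) = u ⬝ᵥ (J *ᵥ (M *ᵥ (J *ᵥ x))) := by
      rw [Jm_mulVec_coordProj_mulVec, dotProduct_coordProj_mulVec, hAx]
    _ = x ⬝ᵥ ((Mᵀ * J * M * J) *ᵥ x) := by
      rw [mulVec_dotProduct_eq_dotProduct_transpose_mulVec]
      simp only [mulVec_mulVec, Matrix.mul_assoc]
    _ = -(x ⬝ᵥ x) := by rw [hM, Jm_mul_self, Matrix.neg_mulVec, one_mulVec, dotProduct_neg]
  have hJw : (J *ᵥ w) ⬝ᵥ (J *ᵥ w) = w ⬝ᵥ w := by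
    rw [mulVec_dotProduct_eq_dotProduct_transpose_mulVec, mulVec_mulVec, transpose_Jm_mul_self,
      one_mulVec]
  have hcs : (u ⬝ᵥ (J *ᵥ w)) ^ 2 ≤ (u ⬝ᵥ u) * ((J *ᵥ w) ⬝ᵥ (J *ᵥ w)) := by
    simpa only [dotProduct, sq] using sum_mul_sq_le_sq_mul_sq univ u (J *ᵥ w)
  rw [hpair, hJw, neg_sq] at hcs
  rw [hGx, hGJx]
  nlinarith [dotProduct_self_nonneg u, dotProduct_self_nonneg w, dotProduct_self_nonneg x,
    sq_nonneg (u ⬝ᵥ u - w ⬝ᵥ w)]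

theorem IsSymplectic.two_mul_card_add_card_sub_le_sum_sq {M : Matrix (ι ⊕ ι) (ι ⊕ ι) ℝ}
    (hM : IsSymplectic M) (A B : Finset ι) :
    2 * ((#A : ℝ) + #B - Fintype.card ι) ≤
      ∑ i ∈ A, ∑ j ∈ B, (M (.inl i) (.inl j) ^ 2 + M (.inl i) (.inr j) ^ 2 +
        M (.inr i) (.inl j) ^ 2 + M (.inr i) (.inr j) ^ 2) := by
  have hdim : (2 * #A + 2 * #B : ℝ) ≤ finrank ℝ (blockSubspace M A B) + 2 * Fintype.card ι := by
    exact_mod_cast two_mul_card_add_two_mul_card_le_finrank_blockSubspace M A B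
  have hfrob := finrank_le_sum_sq_of_two_mul_le (blockSubspace M A B)
    (coordProj A * M * coordProj B) transpose_Jm_mul_self fun x hx =>
      hM.two_mul_dotProduct_self_le (mem_blockSubspace.1 hx).1 (mem_blockSubspace.1 hx).2
  rw [sum_sq_coordProj_mul_mul_coordProj] at hfrob
  linarith

end Symplectic

/-- The matrix `(1/2)(P∘P + Q∘Q + R∘R + S∘S)` associated with a symplectic matrix
`M = [[P,Q],[R,S]]` is doubly superstochastic. -/
theorem stmt2 {n : ℕ} (M : Matrix (Fin n ⊕ Fin n) (Fin n ⊕ Fin n) ℝ)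
    (hM : IsSymplectic M) :
    DoublySuperstochastic (Matrix.of fun i j : Fin n =>
      (1 / 2 : ℝ) * ((M (Sum.inl i) (Sum.inl j)) ^ 2 + (M (Sum.inl i) (Sum.inr j)) ^ 2 +
        (M (Sum.inr i) (Sum.inl j)) ^ 2 + (M (Sum.inr i) (Sum.inr j)) ^ 2)) := by
  unfold DoublySuperstochastic
  refine (exists_mem_doublyStochastic_le _ (fun i j => ?_) fun A B => ?_).imp
    fun E ⟨hE, hET⟩ => ⟨mem_doublyStochastic_iff_sum.1 hE, hET⟩
  · simp only [of_apply]
    positivity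
  · have := hM.two_mul_card_add_card_sub_le_sum_sq A B
    simp only [of_apply, ← mul_sum, Fintype.card_fin] at this ⊢
    linarith
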